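/- With p > 1, q = p/(p-1), and G̃_p the normalized generalized Gaussian, the p-Fisher information satisfies I_p(G̃_p) = n/p, where I_p(u) = (p-1)^p ∫_{ℝⁿ} |∇u|^p/u dx. -/

import Mathlib

/-!
Writing `G̃_p(x) = K e^{-|x|^q / p^q}` one gets `|∇G̃_p| = G̃_p (q / p^q) |x|^{q-1}`, and since
`G̃_p^{p-1} = C_{p,n} e^{-(p-1)|x|^q / p^q}` and `(q-1)p = q`, the integrand of `I_p` is
`C_{p,n} (q/p^q)^p |x|^q e^{-(p-1)|x|^q / p^q}`. In polar coordinates its integral is a Gamma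
integral; the normalisation `C_{p,n}` cancels the volume of the unit ball and `Γ(n/q + 1)`, and
the remaining powers of `p`, `q` and `p - 1` collapse to `1/p` because `1/p + 1/q = 1`.
-/

open MeasureTheory

/-- Normalizing constant of the generalized Gaussian. -/
noncomputable def Cpn (n : ℕ) (p q : ℝ) : ℝ :=
  (p ^ (1 / p) * q ^ (1 / q)) ^ (-(n : ℝ)) * Real.pi ^ (-(n : ℝ) / 2) *
    (Real.Gamma ((n : ℝ) / 2 + 1) / Real.Gamma ((n : ℝ) / q + 1))

/-- The generalized Gaussian profile of the fundamental solution of the p-heat equation. -/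
noncomputable def Gp (n : ℕ) (p q : ℝ) (x : EuclideanSpace ℝ (Fin n)) : ℝ :=
  (Cpn n p q * Real.exp (-((p - 1) / p ^ q) * ‖x‖ ^ q)) ^ (1 / (p - 1))

open Real

lemma Cpn_pos (n : ℕ) {p q : ℝ} (hp : 0 < p) (hq : 0 < q) : 0 < Cpn n p q := by
  have := Gamma_pos_of_pos (by positivity : (0 : ℝ) < n / 2 + 1)
  have := Gamma_pos_of_pos (by positivity : (0 : ℝ) < n / q + 1)
  have := pi_pos
  unfold Cpn
  positivity

section

variable {E : Type*} [NormedAddCommGroup E]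

lemma hasFDerivAt_exp_neg_mul_norm_rpow [InnerProductSpace ℝ E] (b : ℝ) {q : ℝ} (hq : 1 < q)
    (x : E) :
    HasFDerivAt (fun y : E ↦ exp (-b * ‖y‖ ^ q))
      ((exp (-b * ‖x‖ ^ q) * (-b * (q * ‖x‖ ^ (q - 2)))) • innerSL ℝ x) x := by
  simpa only [smul_smul] using ((hasFDerivAt_norm_rpow x hq).const_mul (-b)).exp

lemma norm_fderiv_exp_neg_mul_norm_rpow [InnerProductSpace ℝ E] {b q : ℝ} (hb : 0 ≤ b)
    (hq : 1 < q) (x : E) :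
    ‖fderiv ℝ (fun y : E ↦ exp (-b * ‖y‖ ^ q)) x‖ =
      exp (-b * ‖x‖ ^ q) * b * q * ‖x‖ ^ (q - 1) := by
  have hpow : ‖x‖ ^ (q - 1) = ‖x‖ ^ (q - 2) * ‖x‖ := by
    rw [← rpow_add_one' (norm_nonneg x) (by linarith)]
    ring_nf
  have hq0 : 0 ≤ q := by linarith
  rw [(hasFDerivAt_exp_neg_mul_norm_rpow b hq x).fderiv, norm_smul, innerSL_apply_norm, hpow]
  simp only [norm_mul, norm_neg, Real.norm_of_nonneg hb, Real.norm_of_nonneg hq0,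
    Real.norm_of_nonneg (exp_nonneg _), Real.norm_of_nonneg (rpow_nonneg (norm_nonneg x) _)]
  ring

lemma integral_norm_rpow_mul_exp_neg_mul_norm_rpow [NormedSpace ℝ E] [Nontrivial E]
    [FiniteDimensional ℝ E] [MeasurableSpace E] [BorelSpace E] (μ : Measure E)
    [μ.IsAddHaarMeasure] {a q : ℝ} (ha : 0 < a) (hq : 0 < q) :
    ∫ x, ‖x‖ ^ q * exp (-a * ‖x‖ ^ q) ∂μ =
      Module.finrank ℝ E * μ.real (Metric.ball 0 1) *
        (a ^ (-(Module.finrank ℝ E + q) / q) / q * Gamma (Module.finrank ℝ E / q + 1)) := by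
  set d := Module.finrank ℝ E
  have hd : 1 ≤ d := Module.finrank_pos
  have hradial : ∫ r in Set.Ioi (0 : ℝ), r ^ (d - 1) • (r ^ q * exp (-a * r ^ q)) =
      ∫ r in Set.Ioi (0 : ℝ), r ^ ((d : ℝ) - 1 + q) * exp (-a * r ^ q) := by
    refine setIntegral_congr_fun measurableSet_Ioi fun r (hr : 0 < r) ↦ ?_
    rw [smul_eq_mul, rpow_add hr, ← rpow_natCast, Nat.cast_sub hd, Nat.cast_one, mul_assoc]
  rw [integral_fun_norm_addHaar μ (fun r ↦ r ^ q * exp (-a * r ^ q)), hradial,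
    integral_rpow_mul_exp_neg_mul_rpow hq (by linarith [(Nat.one_le_cast (α := ℝ)).2 hd]) ha,
    nsmul_eq_mul, smul_eq_mul, show (d : ℝ) - 1 + q + 1 = d + q by ring,
    show ((d : ℝ) + q) / q = d / q + 1 by field_simp]
  ring

end

lemma EuclideanSpace.volume_real_ball_zero_one (ι : Type*) [Fintype ι] [Nonempty ι] :
    volume.real (Metric.ball (0 : EuclideanSpace ℝ ι) 1) =
      √π ^ Fintype.card ι / Gamma (Fintype.card ι / 2 + 1) := by
  have := Gamma_pos_of_pos (by positivity : (0 : ℝ) < Fintype.card ι / 2 + 1)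
  rw [measureReal_def, EuclideanSpace.volume_ball]
  simp [ENNReal.toReal_ofReal (by positivity :
    (0 : ℝ) ≤ √π ^ Fintype.card ι / Gamma (Fintype.card ι / 2 + 1))]

section

variable {n : ℕ} {p q : ℝ}

lemma Gp_eq_mul_exp (hpq : p.HolderConjugate q) (x : EuclideanSpace ℝ (Fin n)) :
    Gp n p q x = Cpn n p q ^ (1 / (p - 1)) * exp (-p ^ (-q) * ‖x‖ ^ q) := by
  have hp1 := hpq.sub_one_ne_zero
  rw [Gp, mul_rpow (Cpn_pos n hpq.pos hpq.symm.pos).le (exp_nonneg _), ← exp_mul,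
    rpow_neg hpq.nonneg]
  congr 2
  field_simp

lemma Gp_rpow_sub_one (hpq : p.HolderConjugate q) (x : EuclideanSpace ℝ (Fin n)) :
    Gp n p q x ^ (p - 1) = Cpn n p q * exp (-((p - 1) / p ^ q) * ‖x‖ ^ q) := by
  rw [Gp, ← rpow_mul (by have := Cpn_pos n hpq.pos hpq.symm.pos; positivity),
    one_div_mul_cancel hpq.sub_one_ne_zero, rpow_one]

lemma norm_fderiv_Gp (hpq : p.HolderConjugate q) (x : EuclideanSpace ℝ (Fin n)) :
    ‖fderiv ℝ (Gp n p q) x‖ = Gp n p q x * (q / p ^ q) * ‖x‖ ^ (q - 1) := by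
  have hGp : Gp n p q = fun y ↦ Cpn n p q ^ (1 / (p - 1)) * exp (-p ^ (-q) * ‖y‖ ^ q) :=
    funext (Gp_eq_mul_exp hpq)
  have hb : 0 ≤ p ^ (-q) := rpow_nonneg hpq.nonneg _
  rw [hGp, fderiv_const_mul (hasFDerivAt_exp_neg_mul_norm_rpow _ hpq.symm.lt x).differentiableAt,
    norm_smul, norm_fderiv_exp_neg_mul_norm_rpow hb hpq.symm.lt,
    Real.norm_of_nonneg (rpow_nonneg (Cpn_pos n hpq.pos hpq.symm.pos).le _), rpow_neg hpq.nonneg]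
  ring

lemma pFisher_integrand_Gp (hpq : p.HolderConjugate q) (x : EuclideanSpace ℝ (Fin n)) :
    ‖fderiv ℝ (Gp n p q) x‖ ^ p / Gp n p q x =
      Cpn n p q * (q / p ^ q) ^ p * (‖x‖ ^ q * exp (-((p - 1) / p ^ q) * ‖x‖ ^ q)) := by
  have hG : 0 < Gp n p q x := by
    rw [Gp_eq_mul_exp hpq]; have := Cpn_pos n hpq.pos hpq.symm.pos; positivity
  have hx : (‖x‖ ^ (q - 1)) ^ p = ‖x‖ ^ q := by
    rw [← rpow_mul (norm_nonneg x), sub_one_mul, hpq.symm.mul_eq_add, add_sub_cancel_right]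
  have hGp : Gp n p q x ^ p = Cpn n p q * exp (-((p - 1) / p ^ q) * ‖x‖ ^ q) * Gp n p q x := by
    rw [← Gp_rpow_sub_one hpq, ← rpow_add_one hG.ne', sub_add_cancel]
  have hb : 0 ≤ q / p ^ q := by have := hpq.symm.pos; have := hpq.pos; positivity
  rw [norm_fderiv_Gp hpq, mul_rpow (mul_nonneg hG.le hb) (rpow_nonneg (norm_nonneg x) _),
    mul_rpow hG.le hb, hx, hGp]
  field_simp

end

lemma Cpn_mul_volume_ball_mul_Gamma (n : ℕ) (hn : 1 ≤ n) (p : ℝ) {q : ℝ} (hq : 0 < q) :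
    Cpn n p q * (volume.real (Metric.ball (0 : EuclideanSpace ℝ (Fin n)) 1) * Gamma (n / q + 1)) =
      (p ^ (1 / p) * q ^ (1 / q)) ^ (-(n : ℝ)) := by
  have := Gamma_pos_of_pos (by positivity : (0 : ℝ) < n / 2 + 1)
  have := Gamma_pos_of_pos (by positivity : (0 : ℝ) < n / q + 1)
  have hπ : π ^ (-(n : ℝ) / 2) = (√π ^ n)⁻¹ := by
    rw [sqrt_eq_rpow, ← rpow_natCast, ← rpow_mul pi_pos.le, ← rpow_neg pi_pos.le]
    ring_nf
  have : Nonempty (Fin n) := Fin.pos_iff_nonempty.mp hn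
  rw [EuclideanSpace.volume_real_ball_zero_one, Fintype.card_fin, Cpn, hπ]
  field_simp

lemma pFisher_scaling_eq {p q : ℝ} (hpq : p.HolderConjugate q) (m : ℝ) :
    (p - 1) ^ p * (q / p ^ q) ^ p * ((p - 1) / p ^ q) ^ (-(m + q) / q) / q *
      (p ^ (1 / p) * q ^ (1 / q)) ^ (-m) = 1 / p := by
  have hp := hpq.pos
  have hq := hpq.symm.pos
  rw [← hpq.div_conj_eq_sub_one]
  -- once `p - 1 = p / q`, the logarithm of the left side is linear in `log p` and `log q`
  refine log_injOn_pos (Set.mem_Ioi.2 (by positivity)) (Set.mem_Ioi.2 (by positivity)) ?_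
  simp (disch := positivity) only [log_mul, log_div, log_rpow, one_div, log_inv]
  field_simp
  linear_combination log p * (m - p * q) * hpq.mul_eq_add

theorem pFisher_Gp (n : ℕ) (hn : 1 ≤ n) (p q : ℝ) (hp : 1 < p)
    (hq : q = p / (p - 1)) :
    (p - 1) ^ p * ∫ x, ‖fderiv ℝ (Gp n p q) x‖ ^ p / Gp n p q x = (n : ℝ) / p := by
  have hpq : p.HolderConjugate q := (holderConjugate_iff_eq_conjExponent hp).2 hq
  have : Nonempty (Fin n) := Fin.pos_iff_nonempty.mp hn
  have ha : 0 < (p - 1) / p ^ q := div_pos hpq.sub_one_pos (rpow_pos_of_pos hpq.pos q)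
  simp_rw [pFisher_integrand_Gp hpq]
  rw [integral_const_mul, integral_norm_rpow_mul_exp_neg_mul_norm_rpow volume ha hpq.symm.pos,
    finrank_euclideanSpace_fin]
  calc _ = n * ((p - 1) ^ p * (q / p ^ q) ^ p * ((p - 1) / p ^ q) ^ (-(n + q) / q) / q *
        (Cpn n p q * (volume.real (Metric.ball (0 : EuclideanSpace ℝ (Fin n)) 1) *
          Gamma (n / q + 1)))) := by ring
    _ = n / p := by
      rw [Cpn_mul_volume_ball_mul_Gamma n hn p hpq.symm.pos, pFisher_scaling_eq hpq, mul_one_div]
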